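/- (Forward preservation along symbolic execution of a program.) For every program p : Prog, every validation state (vs, cs), every memory s : ℕ → ℤ, and every assignment asgn, if asgn satisfies cs and vs^asgn ≡ s, then there exist a validation state (vs', cs') ∈ exec p (vs, cs) and an assignment asgn' such that asgn' satisfies cs' and vs'^asgn' ≡ eval p s. -/
import Mathlib


/-- Variables are natural numbers. -/
abbrev Var := ℕ

/-- Binary integer operations: +, −, ×, ÷ (integer division). -/
inductive Op
  | add | sub | mul | div
deriving DecidableEq

def Op.denote : Op → ℤ → ℤ → ℤ
  | .add => (· + ·)
  | .sub => (· - ·)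
  | .mul => (· * ·)
  | .div => (· / ·)

/-- Symbolic server expressions. -/
inductive SExp
  | const : ℤ → SExp
  | read : ℕ → SExp
  | bin : Op → SExp → SExp → SExp
deriving DecidableEq

/-- Evaluation of a server expression on a memory `s : ℕ → ℤ`, written `e^s`. -/
def SExp.eval (s : ℕ → ℤ) : SExp → ℤ
  | .const z => z
  | .read k => s k
  | .bin op e₁ e₂ => op.denote (e₁.eval s) (e₂.eval s)

/-- Validator expressions. -/
inductive VExp
  | const : ℤ → VExp
  | var : Var → VExp
  | bin : Op → VExp → VExp → VExp
deriving DecidableEq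

/-- Evaluation of a validator expression under an assignment, written `e^asgn`. -/
def VExp.eval (asgn : Var → ℤ) : VExp → ℤ
  | .const z => z
  | .var x => asgn x
  | .bin op e₁ e₂ => op.denote (e₁.eval asgn) (e₂.eval asgn)

/-- Symbolization `e^vs` of a server expression: replace every `read src` by `var (vs src)`. -/
def SExp.symb (vs : ℕ → Var) : SExp → VExp
  | .const z => .const z
  | .read k => .var (vs k)
  | .bin op e₁ e₂ => .bin op (e₁.symb vs) (e₂.symb vs)

/-- Comparison operators for constraints: <, ≤, =. -/
inductive Cmp
  | lt | le | eq
deriving DecidableEq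

def Cmp.holds : Cmp → ℤ → ℤ → Prop
  | .lt => (· < ·)
  | .le => (· ≤ ·)
  | .eq => (· = ·)

/-- A constraint is a triple of two validator expressions and a comparison. -/
structure Constraint where
  lhs : VExp
  cmp : Cmp
  rhs : VExp
deriving DecidableEq

/-- `asgn` satisfies the constraint set `cs`. -/
def Sat (asgn : Var → ℤ) (cs : Finset Constraint) : Prop :=
  ∀ c ∈ cs, c.cmp.holds (c.lhs.eval asgn) (c.rhs.eval asgn)

/-- A variable occurs in a validator expression. -/
def VExp.occurs (x : Var) : VExp → Prop
  | .const _ => False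
  | .var y => y = x
  | .bin _ e₁ e₂ => e₁.occurs x ∨ e₂.occurs x

/-- `x` is fresh for the constraint set `cs`: it occurs in no constraint of `cs`. -/
def FreshCs (x : Var) (cs : Finset Constraint) : Prop :=
  ∀ c ∈ cs, ¬ c.lhs.occurs x ∧ ¬ c.rhs.occurs x

/-- `x` is fresh for `vs : ℕ → Var`. -/
def FreshVs (x : Var) (vs : ℕ → Var) : Prop :=
  ∀ k : ℕ, vs k ≠ x

/-- One more than the largest variable occurring in a validator expression
(a strict upper bound on its variables). -/
def VExp.maxVar : VExp → ℕ
  | .const _ => 0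
  | .var x => x + 1
  | .bin _ e₁ e₂ => max e₁.maxVar e₂.maxVar

def Constraint.maxVar (c : Constraint) : ℕ :=
  max c.lhs.maxVar c.rhs.maxVar

/-- A validation state: a map from addresses to their representing variables
(with finite support, so that fresh variables exist), and a finite set of
constraints. -/
abbrev VState := (ℕ →₀ ℕ) × Finset Constraint

/-- A fixed variable fresh for both `vs` and `cs`. -/
def freshVar (vs : ℕ →₀ ℕ) (cs : Finset Constraint) : Var :=
  max (vs.support.sup ⇑vs) (cs.sup Constraint.maxVar) + 1

/-- The write rule on validation states. -/
noncomputable def writeV (d : ℕ) (e : SExp) (w : VState) : VState :=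
  let x := freshVar w.1 w.2
  (w.1.update d x, insert ⟨VExp.var x, Cmp.eq, e.symb w.1⟩ w.2)

/-- The havoc rule on validation states. -/
noncomputable def havocV (d : ℕ) (w : VState) : VState :=
  (w.1.update d (freshVar w.1 w.2), w.2)

/-- Programs in the `Prog` language. -/
inductive Prog
  | ret
  | write (dst : ℕ) (e : SExp) (p : Prog)
  | branch (e₁ e₂ : SExp) (p₁ p₂ : Prog)

/-- Semantics of `Prog` on integer memories. -/
def evalProg : Prog → (ℕ → ℤ) → (ℕ → ℤ)
  | .ret, s => s
  | .write d e p, s => evalProg p (Function.update s d (e.eval s))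
  | .branch e₁ e₂ p₁ p₂, s =>
      if e₁.eval s ≤ e₂.eval s then evalProg p₁ s else evalProg p₂ s

/-- The symbolic executor on validation states. -/
noncomputable def exec : Prog → VState → Finset VState
  | .ret, w => {w}
  | .write d e p, w => exec p (writeV d e w)
  | .branch e₁ e₂ p₁ p₂, w =>
      exec p₁ (w.1, insert ⟨e₁.symb w.1, Cmp.le, e₂.symb w.1⟩ w.2) ∪
      exec p₂ (w.1, insert ⟨e₂.symb w.1, Cmp.lt, e₁.symb w.1⟩ w.2)

lemma symb_eval (vs : ℕ → Var) (asgn : Var → ℤ) (s : ℕ → ℤ)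
    (h : ∀ k, asgn (vs k) = s k) : ∀ e : SExp, (e.symb vs).eval asgn = e.eval s
  | .const z => rfl
  | .read k => h k
  | .bin op e₁ e₂ => by
      simp only [SExp.symb, SExp.eval, VExp.eval,
        symb_eval vs asgn s h e₁, symb_eval vs asgn s h e₂]

lemma eval_update (x : Var) (v : ℤ) (asgn : Var → ℤ) :
    ∀ e : VExp, e.maxVar ≤ x → e.eval (Function.update asgn x v) = e.eval asgn
  | .const _, _ => rfl
  | .var y, h => by
      simp only [VExp.maxVar] at h
      simp only [VExp.eval]
      exact Function.update_of_ne (Nat.ne_of_lt h) v asgn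
  | .bin op e₁ e₂, h => by
      simp only [VExp.maxVar, max_le_iff] at h
      simp only [VExp.eval, eval_update x v asgn e₁ h.1, eval_update x v asgn e₂ h.2]

lemma vs_lt_fresh (vs : ℕ →₀ ℕ) (cs : Finset Constraint) (k : ℕ) :
    vs k < freshVar vs cs := by
  have : vs k ≤ vs.support.sup ⇑vs := by
    by_cases h : k ∈ vs.support
    · exact Finset.le_sup h
    · simp [Finsupp.notMem_support_iff.mp h]
  unfold freshVar; omega

lemma cs_maxVar_le (vs : ℕ →₀ ℕ) (cs : Finset Constraint) {c : Constraint}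
    (hc : c ∈ cs) : c.maxVar ≤ freshVar vs cs := by
  have := Finset.le_sup (f := Constraint.maxVar) hc
  unfold freshVar; omega

lemma symb_maxVar_le (vs : ℕ →₀ ℕ) (cs : Finset Constraint) :
    ∀ e : SExp, (e.symb vs).maxVar ≤ freshVar vs cs
  | .const _ => Nat.zero_le _
  | .read k => vs_lt_fresh vs cs k
  | .bin op e₁ e₂ => by
      simp only [SExp.symb, VExp.maxVar, max_le_iff]
      exact ⟨symb_maxVar_le vs cs e₁, symb_maxVar_le vs cs e₂⟩

/-- Forward preservation along symbolic execution of a program. -/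
theorem exec_forward_preservation
    (p : Prog) (vs : ℕ →₀ ℕ) (cs : Finset Constraint)
    (s : ℕ → ℤ) (asgn : Var → ℤ)
    (hsat : Sat asgn cs) (hrefl : ∀ k : ℕ, asgn (vs k) = s k) :
    ∃ w ∈ exec p (vs, cs), ∃ asgn' : Var → ℤ,
      Sat asgn' w.2 ∧ ∀ k : ℕ, asgn' (w.1 k) = evalProg p s k := by
  induction p generalizing vs cs s asgn with
  | ret =>
      exact ⟨(vs, cs), by simp [exec], asgn, hsat, hrefl⟩
  | write d e p ih =>
      set x := freshVar vs cs with hx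
      set asgn' := Function.update asgn x (e.eval s) with hasgn'
      set cs' := insert ⟨VExp.var x, Cmp.eq, e.symb vs⟩ cs with hcs'
      have hsymb : ∀ e' : SExp, (e'.symb vs).eval asgn' = e'.eval s := by
        intro e'
        rw [hasgn', eval_update x (e.eval s) asgn _ (symb_maxVar_le vs cs e')]
        exact symb_eval vs asgn s hrefl e'
      have hsat' : Sat asgn' cs' := by
        intro c hc
        rcases Finset.mem_insert.mp hc with h | h
        · subst h
          simp only [Cmp.holds, VExp.eval]
          rw [hasgn', Function.update_self, hsymb e]
        · have hm := cs_maxVar_le vs cs h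
          have h1 : c.lhs.maxVar ≤ x := le_trans (le_max_left _ _) hm
          have h2 : c.rhs.maxVar ≤ x := le_trans (le_max_right _ _) hm
          rw [hasgn', eval_update x _ asgn _ h1, eval_update x _ asgn _ h2]
          exact hsat c h
      have hrefl' : ∀ k, asgn' ((vs.update d x) k) = Function.update s d (e.eval s) k := by
        intro k
        by_cases hk : k = d
        · subst hk
          simp [Finsupp.coe_update, asgn']
        · rw [Finsupp.coe_update, Function.update_of_ne hk, Function.update_of_ne hk]
          rw [hasgn', Function.update_of_ne (Nat.ne_of_lt (vs_lt_fresh vs cs k)), hrefl]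
      obtain ⟨w, hw, asgn'', hsat'', hrefl''⟩ := ih (vs.update d x) cs'
        (Function.update s d (e.eval s)) asgn' hsat' hrefl'
      refine ⟨w, ?_, asgn'', hsat'', hrefl''⟩
      simpa [exec, writeV, ← hx, ← hcs'] using hw
  | branch e₁ e₂ p₁ p₂ ih₁ ih₂ =>
      have hsymb : ∀ e' : SExp, (e'.symb vs).eval asgn = e'.eval s :=
        symb_eval vs asgn s hrefl
      by_cases h : e₁.eval s ≤ e₂.eval s
      · have hsat' : Sat asgn (insert ⟨e₁.symb vs, Cmp.le, e₂.symb vs⟩ cs) := by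
          intro c hc
          rcases Finset.mem_insert.mp hc with hceq | hcm
          · subst hceq; simpa [Cmp.holds, hsymb] using h
          · exact hsat c hcm
        obtain ⟨w, hw, asgn'', hsat'', hrefl''⟩ := ih₁ vs _ s asgn hsat' hrefl
        refine ⟨w, ?_, asgn'', hsat'', fun k => by rw [hrefl'']; simp [evalProg, h]⟩
        simp only [exec, Finset.mem_union]
        exact Or.inl hw
      · have hsat' : Sat asgn (insert ⟨e₂.symb vs, Cmp.lt, e₁.symb vs⟩ cs) := by
          intro c hc
          rcases Finset.mem_insert.mp hc with hceq | hcm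
          · subst hceq; simp only [Cmp.holds, hsymb]; omega
          · exact hsat c hcm
        obtain ⟨w, hw, asgn'', hsat'', hrefl''⟩ := ih₂ vs _ s asgn hsat' hrefl
        refine ⟨w, ?_, asgn'', hsat'', fun k => by rw [hrefl'']; simp [evalProg, h]⟩
        simp only [exec, Finset.mem_union]
        exact Or.inr hw
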